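/- Let G be a finite connected undirected weighted graph on N vertices with graph Laplacian Δ, eigenvalues 0 = λ_0 < λ_1 ≤ … ≤ λ_{N−1}, orthonormal eigenvectors φ_0, …, φ_{N−1}, Hermitian graph wavelets ψ_{t,x}, and Maximum Diffusion Time MDT(x) = ∫_0^∞ ‖ψ_{t,x}‖² dt. Then the set of vertices minimizing MDT equals the set of vertices minimizing x ↦ Σ_{k=1}^{N−1} |φ_k(x)|²/λ_k; that is, {x ∈ V : ∀ y ∈ V, MDT(x) ≤ MDT(y)} = {x ∈ V : ∀ y ∈ V, Σ_{k=1}^{N−1} |φ_k(x)|²/λ_k ≤ Σ_{k=1}^{N−1} |φ_k(y)|²/λ_k}. -/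
import Mathlib

open Finset MeasureTheory

/-- The Hermitian graph wavelet `ψ_{t,x}(y) = ∑_{k=1}^{N-1} t λ_k e^{-t λ_k} φ_k(x) φ_k(y)`. -/
noncomputable def hermPsi {N : ℕ} (lam : Fin N → ℝ) (φ : Fin N → Fin N → ℝ)
    (t : ℝ) (x y : Fin N) : ℝ :=
  ∑ k ∈ Finset.univ.filter (fun k : Fin N => (k : ℕ) ≠ 0),
    t * lam k * Real.exp (-(t * lam k)) * φ k x * φ k y

/-- The squared norm `‖ψ_{t,x}‖² = ∑_{y} ψ_{t,x}(y)²`. -/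
noncomputable def waveNormSq {N : ℕ} (lam : Fin N → ℝ) (φ : Fin N → Fin N → ℝ)
    (t : ℝ) (x : Fin N) : ℝ :=
  ∑ y, (hermPsi lam φ t x y) ^ 2

/-- The Maximum (Mean) Diffusion Time `MDT(x) = ∫_0^∞ ‖ψ_{t,x}‖² dt`. -/
noncomputable def MDT {N : ℕ} (lam : Fin N → ℝ) (φ : Fin N → Fin N → ℝ) (x : Fin N) : ℝ :=
  ∫ t in Set.Ioi (0:ℝ), waveNormSq lam φ t x

lemma mode_eq {a t : ℝ} :
    (t * a * Real.exp (-(t * a))) ^ 2 = a ^ 2 * (t ^ 2 * Real.exp (-(2 * a) * t)) := by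
  have he : Real.exp (-(t * a)) ^ 2 = Real.exp (-(2 * a) * t) := by
    rw [← Real.exp_nat_mul]; congr 1; push_cast; ring
  rw [mul_pow, mul_pow, he]; ring

lemma integrableOn_mode {a : ℝ} (ha : 0 < a) :
    IntegrableOn (fun t : ℝ => (t * a * Real.exp (-(t * a))) ^ 2) (Set.Ioi 0) := by
  apply integrable_of_isBigO_exp_neg ha (a := 0)
  · fun_prop
  · have h2 := tendsto_rpow_mul_exp_neg_mul_atTop_nhds_zero 2 a ha
    have h : Filter.Tendsto
        (fun t : ℝ => (t * a * Real.exp (-(t * a))) ^ 2 / Real.exp (-a * t))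
        Filter.atTop (nhds 0) := by
      have := (h2.const_mul (a ^ 2))
      rw [mul_zero] at this
      apply this.congr'
      filter_upwards [Filter.eventually_ge_atTop (0:ℝ)] with t ht
      have hee : Real.exp (-(2*a)*t) = Real.exp (-a*t) * Real.exp (-a*t) := by
        rw [← Real.exp_add]; ring_nf
      rw [Real.rpow_two, mode_eq, hee, mul_div_assoc, mul_div_assoc,
        mul_div_cancel_right₀ _ (Real.exp_ne_zero _)]
    exact (Asymptotics.isLittleO_of_tendsto (fun x hx => absurd hx (Real.exp_ne_zero _)) h).isBigO

lemma integral_mode {a : ℝ} (ha : 0 < a) :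
    ∫ t in Set.Ioi (0:ℝ), (t * a * Real.exp (-(t * a))) ^ 2 = 1 / (4 * a) := by
  have h2a : (0:ℝ) < 2 * a := by linarith
  have hcong : ∀ t ∈ Set.Ioi (0:ℝ),
      (t * a * Real.exp (-(t * a))) ^ 2
        = a ^ 2 * (t ^ ((3:ℝ) - 1) * Real.exp (-(2 * a * t))) := by
    intro t ht
    have h3 : t ^ ((3:ℝ) - 1) = t ^ (2:ℕ) := by
      rw [show (3:ℝ) - 1 = ((2:ℕ):ℝ) by norm_num, Real.rpow_natCast]
    rw [h3, mode_eq]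
    ring_nf
  rw [setIntegral_congr_fun measurableSet_Ioi hcong]
  rw [integral_const_mul, Real.integral_rpow_mul_exp_neg_mul_Ioi (by norm_num) h2a]
  have hg : Real.Gamma 3 = 2 := by
    rw [show (3:ℝ) = ((2:ℕ):ℝ) + 1 by norm_num, Real.Gamma_nat_eq_factorial]
    norm_num
  rw [hg, show ((1:ℝ)/(2*a)) ^ (3:ℝ) = ((1:ℝ)/(2*a)) ^ (3:ℕ) from Real.rpow_natCast _ 3]
  field_simp
  ring

theorem argmin_MDT_eq_argmin_spectral_sum
    (N : ℕ) (hN : 1 < N)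
    (w : Fin N → Fin N → ℝ)
    (hw_symm : ∀ x y, w x y = w y x)
    (hw_nonneg : ∀ x y, 0 ≤ w x y)
    (hw_diag : ∀ x, w x x = 0)
    (Δ : Matrix (Fin N) (Fin N) ℝ)
    (hΔ : ∀ x y, Δ x y = (if x = y then ∑ z, w x z else 0) - w x y)
    (lam : Fin N → ℝ) (φ : Fin N → Fin N → ℝ)
    (hmono : Monotone lam)
    (heig : ∀ k, Δ.mulVec (φ k) = lam k • φ k)
    (horth : ∀ j k, (∑ y, φ j y * φ k y) = if j = k then (1:ℝ) else 0)
    (hlam0 : lam ⟨0, by omega⟩ = 0)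
    (hconn : 0 < lam ⟨1, hN⟩) :
    {x : Fin N | ∀ y : Fin N, MDT lam φ x ≤ MDT lam φ y}
      = {x : Fin N | ∀ y : Fin N,
          ∑ k ∈ Finset.univ.filter (fun k : Fin N => (k : ℕ) ≠ 0), φ k x ^ 2 / lam k
            ≤ ∑ k ∈ Finset.univ.filter (fun k : Fin N => (k : ℕ) ≠ 0), φ k y ^ 2 / lam k} := by
  set S := Finset.univ.filter (fun k : Fin N => (k : ℕ) ≠ 0) with hS
  have hlampos : ∀ k ∈ S, 0 < lam k := by
    intro k hk
    rw [hS, Finset.mem_filter] at hk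
    have h1 : (⟨1, hN⟩ : Fin N) ≤ k := by
      have : 1 ≤ (k : ℕ) := Nat.one_le_iff_ne_zero.mpr hk.2
      exact this
    exact lt_of_lt_of_le hconn (hmono h1)
  -- waveNormSq simplification
  have hwns : ∀ t x, waveNormSq lam φ t x
      = ∑ k ∈ S, (t * lam k * Real.exp (-(t * lam k))) ^ 2 * φ k x ^ 2 := by
    intro t x
    unfold waveNormSq hermPsi
    rw [← hS]
    have hterm : ∀ j k : Fin N,
        (∑ y, (t * lam j * Real.exp (-(t * lam j)) * φ j x * φ j y)
          * (t * lam k * Real.exp (-(t * lam k)) * φ k x * φ k y))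
        = if j = k then
            (t * lam j * Real.exp (-(t * lam j))) ^ 2 * φ j x ^ 2 else 0 := by
      intro j k
      have : ∀ y : Fin N,
          (t * lam j * Real.exp (-(t * lam j)) * φ j x * φ j y)
            * (t * lam k * Real.exp (-(t * lam k)) * φ k x * φ k y)
          = (t * lam j * Real.exp (-(t * lam j)) * φ j x)
            * (t * lam k * Real.exp (-(t * lam k)) * φ k x) * (φ j y * φ k y) := by
        intro y; ring
      simp_rw [this, ← Finset.mul_sum, horth j k]
      split_ifs with h
      · subst h; ring
      · ring
    calc ∑ y, (∑ k ∈ S, t * lam k * Real.exp (-(t * lam k)) * φ k x * φ k y) ^ 2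
        = ∑ y, ∑ j ∈ S, ∑ k ∈ S,
            (t * lam j * Real.exp (-(t * lam j)) * φ j x * φ j y)
              * (t * lam k * Real.exp (-(t * lam k)) * φ k x * φ k y) := by
          simp_rw [sq, Finset.sum_mul_sum]
      _ = ∑ j ∈ S, ∑ k ∈ S,
            ∑ y, (t * lam j * Real.exp (-(t * lam j)) * φ j x * φ j y)
              * (t * lam k * Real.exp (-(t * lam k)) * φ k x * φ k y) := by
          rw [Finset.sum_comm]
          exact Finset.sum_congr rfl fun j _ => Finset.sum_comm
      _ = ∑ j ∈ S, ∑ k ∈ S, (if j = k then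
            (t * lam j * Real.exp (-(t * lam j))) ^ 2 * φ j x ^ 2 else 0) := by
          simp_rw [hterm]
      _ = ∑ k ∈ S, (t * lam k * Real.exp (-(t * lam k))) ^ 2 * φ k x ^ 2 := by
          apply Finset.sum_congr rfl
          intro j hj
          rw [Finset.sum_ite_eq S j
            (fun _ => (t * lam j * Real.exp (-(t * lam j))) ^ 2 * φ j x ^ 2)]
          simp [hj]
  -- MDT value
  have hMDT : ∀ x, MDT lam φ x = ∑ k ∈ S, φ k x ^ 2 / (4 * lam k) := by
    intro x
    unfold MDT
    have : ∀ t : ℝ, waveNormSq lam φ t x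
        = ∑ k ∈ S, (fun t => (t * lam k * Real.exp (-(t * lam k))) ^ 2 * φ k x ^ 2) t :=
      fun t => hwns t x
    rw [MeasureTheory.integral_congr_ae (Filter.Eventually.of_forall this)]
    rw [MeasureTheory.integral_finset_sum]
    · apply Finset.sum_congr rfl
      intro k hk
      rw [MeasureTheory.integral_mul_const, integral_mode (hlampos k hk)]
      ring
    · intro k hk
      exact (integrableOn_mode (hlampos k hk)).mul_const _
  -- final
  ext x
  simp only [Set.mem_setOf_eq]
  have key : ∀ a b : Fin N,
      (MDT lam φ a ≤ MDT lam φ b ↔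
        ∑ k ∈ S, φ k a ^ 2 / lam k ≤ ∑ k ∈ S, φ k b ^ 2 / lam k) := by
    intro a b
    rw [hMDT a, hMDT b]
    have he : ∀ c : Fin N, ∑ k ∈ S, φ k c ^ 2 / (4 * lam k)
        = (1/4) * ∑ k ∈ S, φ k c ^ 2 / lam k := by
      intro c
      rw [Finset.mul_sum]
      apply Finset.sum_congr rfl
      intro k hk
      have := (hlampos k hk).ne'
      field_simp
    rw [he a, he b]
    constructor <;> intro h <;> linarith
  exact forall_congr' fun y => key x y
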